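/- Let S be a semigroup with a stable minimal ideal, and let C = (I, N) be an IN-pair on S, i.e. I is an ideal and N is a normal subgroup of a maximal subgroup contained in a stable, regular J-class J that is minimal among J-classes of S \ I. Then the relation R_C = Δ_S ∪ ν_N ∪ (I × I) is a congruence on S, where ν_N = S¹(N × N)S¹ ∩ (J × J). -/

import Mathlib

namespace SG

variable {S : Type*} [Semigroup S]

/-- An ideal of a semigroup: a nonempty subset closed under left and right
multiplication by arbitrary elements. -/
def IsIdeal (I : Set S) : Prop :=
  I.Nonempty ∧ ∀ x ∈ I, ∀ a : S, a * x ∈ I ∧ x * a ∈ I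

/-- The minimal ideal: an ideal contained in every ideal. -/
def IsMinIdeal (M : Set S) : Prop :=
  IsIdeal M ∧ ∀ I : Set S, IsIdeal I → M ⊆ I

/-- Every element of the set is regular. -/
def RegularSet (M : Set S) : Prop := ∀ m ∈ M, ∃ y : S, m * y * m = m

/-- `f` is a retraction of the ideal `I` onto the minimal ideal `M`:
a homomorphism `I → M` fixing `M` pointwise. -/
def IsRetraction (I M : Set S) (f : S → S) : Prop :=
  (∀ x ∈ I, f x ∈ M) ∧ (∀ x ∈ I, ∀ y ∈ I, f (x * y) = f x * f y) ∧ ∀ x ∈ M, f x = x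

/-- Green's R relation (via S¹ = `WithOne S`). -/
def GreenR (a b : S) : Prop :=
  (∃ u : WithOne S, (a : WithOne S) * u = (b : WithOne S)) ∧
    ∃ v : WithOne S, (b : WithOne S) * v = (a : WithOne S)

/-- Green's L relation. -/
def GreenL (a b : S) : Prop :=
  (∃ u : WithOne S, u * (a : WithOne S) = (b : WithOne S)) ∧
    ∃ v : WithOne S, v * (b : WithOne S) = (a : WithOne S)

/-- Green's J relation. -/
def GreenJ (a b : S) : Prop :=
  (∃ u v : WithOne S, u * (a : WithOne S) * v = (b : WithOne S)) ∧
    ∃ u v : WithOne S, u * (b : WithOne S) * v = (a : WithOne S)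

/-- Green's H relation. -/
def GreenH (a b : S) : Prop := GreenR a b ∧ GreenL a b

/-- Green's D relation, as R ∘ L. -/
def GreenD (a b : S) : Prop := ∃ c : S, GreenR a c ∧ GreenL c b

/-- A set is stable if for its elements `x`: `xa J x → xa R x` and `ax J x → ax L x`. -/
def StableSet (J : Set S) : Prop :=
  ∀ x ∈ J, ∀ a : S, (GreenJ (x * a) x → GreenR (x * a) x) ∧ (GreenJ (a * x) x → GreenL (a * x) x)

/-- The set is a J-class. -/
def IsJClass (J : Set S) : Prop := ∃ a : S, J = {b | GreenJ a b}

/-- The set is a D-class. -/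
def IsDClass (J : Set S) : Prop := ∃ a : S, J = {b | GreenD a b}

/-- A binary relation is a congruence on the semigroup. -/
def IsCongruence (r : S → S → Prop) : Prop :=
  Equivalence r ∧ ∀ a b c : S, r a b → r (c * a) (c * b) ∧ r (a * c) (b * c)

/-- `N` is a normal subgroup of the subgroup `G` of `S` with identity `e`. -/
def IsNormalIn (N G : Set S) (e : S) : Prop :=
  N ⊆ G ∧ e ∈ N ∧ (∀ x ∈ N, ∀ y ∈ N, x * y ∈ N) ∧
    (∀ x ∈ N, ∃ y ∈ N, x * y = e ∧ y * x = e) ∧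
    ∀ g ∈ G, ∀ g' ∈ G, g * g' = e → g' * g = e → ∀ x ∈ N, g * x * g' ∈ N

/-- The relation ν_N = S¹(N × N)S¹ ∩ (J × J). -/
def Nu (J N : Set S) (a b : S) : Prop :=
  a ∈ J ∧ b ∈ J ∧ ∃ x ∈ N, ∃ y ∈ N, ∃ s t : WithOne S,
    s * (x : WithOne S) * t = (a : WithOne S) ∧ s * (y : WithOne S) * t = (b : WithOne S)

/-- `J` is disjoint from `I` and is minimal among the J-classes of `S \ I`. -/
def MinimalJClassOutside (J I : Set S) : Prop :=
  (∀ a ∈ J, a ∉ I) ∧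
    ∀ b : S, b ∉ I →
      (∃ a ∈ J, ∃ u v : WithOne S, u * (a : WithOne S) * v = (b : WithOne S)) → b ∈ J

end SG

/-!
If `σ x τ ∈ J` with `x ∈ H_e`, then `p = σe` and `q = eτ` lie in `J`, so by stability `p L e` and
`q R e`; thus `σ z τ = p z q` for every `z ∈ H_e`, and every such `p z q` is `J`-equivalent to
`e z e = z`, hence lies in `J`. So the two sides of a `ν_N`-pair, multiplied by the same element,
either both stay in `J` or both drop out of it, and then into `I` by the minimality of `J`.

For transitivity, write `b = p y q = p' x' q'`. Stability gives `b R p`, `b R p'`, `b L q`,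
`b L q'`, so `p' = p k` and `q' = h q` with `k, h ∈ H_e`; cancelling `p` and `q` gives
`y = k x' h`, whence `p' y' q' = p (k (y' x'⁻¹) k⁻¹ y) q` with `k (y' x'⁻¹) k⁻¹ y ∈ N`.
-/

namespace SG

variable {S : Type*} [Semigroup S]

theorem exists_coe_eq_mul_coe (u : WithOne S) (x : S) : ∃ p : S, (p : WithOne S) = u * x := by
  induction u using WithOne.recOneCoe with
  | one => exact ⟨x, (one_mul _).symm⟩
  | coe s => exact ⟨s * x, WithOne.coe_mul s x⟩

theorem exists_coe_eq_coe_mul (x : S) (u : WithOne S) : ∃ q : S, (q : WithOne S) = x * u := by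
  induction u using WithOne.recOneCoe with
  | one => exact ⟨x, (mul_one _).symm⟩
  | coe t => exact ⟨x * t, WithOne.coe_mul x t⟩

/-- `JLe a b` is `a ≤_J b`, i.e. `a ∈ S¹ b S¹`; thus `GreenJ a b` unfolds to `JLe b a ∧ JLe a b`. -/
def JLe (a b : S) : Prop := ∃ u v : WithOne S, u * (b : WithOne S) * v = a

theorem JLe.trans {a b c : S} (hab : JLe a b) (hbc : JLe b c) : JLe a c := by
  obtain ⟨u, v, huv⟩ := hab
  obtain ⟨u', v', huv'⟩ := hbc
  exact ⟨u * u', v' * v, by rw [← huv, ← huv']; simp only [mul_assoc]⟩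

theorem jLe_mul_right (a b : S) : JLe (a * b) a := ⟨1, b, by rw [one_mul, WithOne.coe_mul]⟩

theorem jLe_mul_left (a b : S) : JLe (a * b) b := ⟨a, 1, by rw [mul_one, WithOne.coe_mul]⟩

theorem GreenJ.symm {a b : S} (h : GreenJ a b) : GreenJ b a := ⟨h.2, h.1⟩

theorem GreenJ.trans {a b c : S} (hab : GreenJ a b) (hbc : GreenJ b c) : GreenJ a c :=
  ⟨JLe.trans hbc.1 hab.1, JLe.trans hab.2 hbc.2⟩

theorem GreenR.refl (a : S) : GreenR a a := ⟨⟨1, mul_one _⟩, ⟨1, mul_one _⟩⟩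

theorem GreenR.symm {a b : S} (h : GreenR a b) : GreenR b a := ⟨h.2, h.1⟩

theorem GreenR.trans {a b c : S} (hab : GreenR a b) (hbc : GreenR b c) : GreenR a c := by
  obtain ⟨⟨u, hu⟩, ⟨v, hv⟩⟩ := hab
  obtain ⟨⟨u', hu'⟩, ⟨v', hv'⟩⟩ := hbc
  exact ⟨⟨u * u', by rw [← mul_assoc, hu, hu']⟩, ⟨v' * v, by rw [← mul_assoc, hv', hv]⟩⟩

theorem GreenR.greenJ {a b : S} (h : GreenR a b) : GreenJ a b := by
  obtain ⟨⟨u, hu⟩, ⟨v, hv⟩⟩ := h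
  exact ⟨⟨1, u, by rw [one_mul, hu]⟩, ⟨1, v, by rw [one_mul, hv]⟩⟩

theorem GreenL.greenJ {a b : S} (h : GreenL a b) : GreenJ a b := by
  obtain ⟨⟨u, hu⟩, ⟨v, hv⟩⟩ := h
  exact ⟨⟨u, 1, by rw [mul_one, hu]⟩, ⟨v, 1, by rw [mul_one, hv]⟩⟩

theorem GreenL.refl (a : S) : GreenL a a := ⟨⟨1, one_mul _⟩, ⟨1, one_mul _⟩⟩

theorem GreenL.symm {a b : S} (h : GreenL a b) : GreenL b a := ⟨h.2, h.1⟩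

theorem GreenL.trans {a b c : S} (hab : GreenL a b) (hbc : GreenL b c) : GreenL a c := by
  obtain ⟨⟨u, hu⟩, ⟨v, hv⟩⟩ := hab
  obtain ⟨⟨u', hu'⟩, ⟨v', hv'⟩⟩ := hbc
  exact ⟨⟨u' * u, by rw [mul_assoc, hu, hu']⟩, ⟨v * v', by rw [mul_assoc, hv', hv]⟩⟩

section Idempotent

variable {e : S}

theorem GreenL.mul_idem_eq {p : S} (he : IsIdempotentElem e) (h : GreenL p e) : p * e = p := by
  obtain ⟨v, hv⟩ := h.2
  apply WithOne.coe_injective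
  rw [WithOne.coe_mul, ← hv, mul_assoc, ← WithOne.coe_mul, he.eq]

theorem GreenR.idem_mul_eq {q : S} (he : IsIdempotentElem e) (h : GreenR q e) : e * q = q := by
  obtain ⟨v, hv⟩ := h.2
  apply WithOne.coe_injective
  rw [WithOne.coe_mul, ← hv, ← mul_assoc, ← WithOne.coe_mul, he.eq]

theorem GreenL.idem_mul_eq_of_mul_eq {p z z' : S} (hp : GreenL p e) (h : p * z = p * z') :
    e * z = e * z' := by
  obtain ⟨u, hu⟩ := hp.1
  apply WithOne.coe_injective
  rw [WithOne.coe_mul, WithOne.coe_mul, ← hu, mul_assoc, mul_assoc, ← WithOne.coe_mul,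
    ← WithOne.coe_mul, h]

theorem GreenR.mul_idem_eq_of_mul_eq {q z z' : S} (hq : GreenR q e) (h : z * q = z' * q) :
    z * e = z' * e := by
  obtain ⟨v, hv⟩ := hq.1
  apply WithOne.coe_injective
  rw [WithOne.coe_mul, WithOne.coe_mul, ← hv, ← mul_assoc, ← mul_assoc, ← WithOne.coe_mul,
    ← WithOne.coe_mul, h]

theorem idem_mul_mul_idem_eq_of_mul_mul_eq {p q z z' : S} (hp : GreenL p e) (hq : GreenR q e)
    (h : p * z * q = p * z' * q) : e * z * e = e * z' * e := by
  refine hq.mul_idem_eq_of_mul_eq ?_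
  simp only [mul_assoc] at h ⊢
  exact hp.idem_mul_eq_of_mul_eq h

theorem greenH_of_mul_eq {k k' : S} (hkk' : k * k' = e) (hk'k : k' * k = e) (hek : e * k = k)
    (hke : k * e = k) : GreenH k e :=
  ⟨⟨⟨k', by rw [← WithOne.coe_mul, hkk']⟩, ⟨k, by rw [← WithOne.coe_mul, hek]⟩⟩,
    ⟨⟨k', by rw [← WithOne.coe_mul, hk'k]⟩, ⟨k, by rw [← WithOne.coe_mul, hke]⟩⟩⟩

theorem exists_mul_eq_of_coe_mul_eq {p p' : S} {u : WithOne S} (he : IsIdempotentElem e)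
    (hp : GreenL p e) (hp' : GreenL p' e) (h : (p : WithOne S) * u = p') :
    ∃ k, e * k = k ∧ k * e = k ∧ p * k = p' := by
  obtain ⟨r, hr⟩ := exists_coe_eq_mul_coe u e
  have hre : r * e = r := WithOne.coe_injective (by
    rw [WithOne.coe_mul, hr, mul_assoc, ← WithOne.coe_mul, he.eq])
  refine ⟨e * r, by rw [← mul_assoc, he.eq], by rw [mul_assoc, hre], ?_⟩
  rw [← mul_assoc, hp.mul_idem_eq he]
  apply WithOne.coe_injective
  rw [WithOne.coe_mul, hr, ← mul_assoc, h, ← WithOne.coe_mul, hp'.mul_idem_eq he]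

theorem exists_mul_eq_of_mul_coe_eq {q q' : S} {u : WithOne S} (he : IsIdempotentElem e)
    (hq : GreenR q e) (hq' : GreenR q' e) (h : u * (q : WithOne S) = q') :
    ∃ k, e * k = k ∧ k * e = k ∧ k * q = q' := by
  obtain ⟨r, hr⟩ := exists_coe_eq_coe_mul e u
  have her : e * r = r := WithOne.coe_injective (by
    rw [WithOne.coe_mul, hr, ← mul_assoc, ← WithOne.coe_mul, he.eq])
  refine ⟨r * e, by rw [← mul_assoc, her], by rw [mul_assoc, he.eq], ?_⟩
  rw [mul_assoc, hq.idem_mul_eq he]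
  apply WithOne.coe_injective
  rw [WithOne.coe_mul, hr, mul_assoc, h, ← WithOne.coe_mul, hq'.idem_mul_eq he]

theorem exists_greenH_mul_eq_of_greenR {p p' : S} (he : IsIdempotentElem e) (hp : GreenL p e)
    (hp' : GreenL p' e) (h : GreenR p p') :
    ∃ k k', GreenH k e ∧ GreenH k' e ∧ k * k' = e ∧ k' * k = e ∧ p * k = p' := by
  obtain ⟨⟨u, hu⟩, ⟨v, hv⟩⟩ := h
  obtain ⟨k, hek, hke, hpk⟩ := exists_mul_eq_of_coe_mul_eq he hp hp' hu
  obtain ⟨k', hek', hk'e, hpk'⟩ := exists_mul_eq_of_coe_mul_eq he hp' hp hv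
  have hkk' : k * k' = e := by
    have := hp.idem_mul_eq_of_mul_eq (z := k * k') (z' := e)
      (by rw [← mul_assoc, hpk, hpk', hp.mul_idem_eq he])
    rwa [← mul_assoc, hek, he.eq] at this
  have hk'k : k' * k = e := by
    have := hp'.idem_mul_eq_of_mul_eq (z := k' * k) (z' := e)
      (by rw [← mul_assoc, hpk', hpk, hp'.mul_idem_eq he])
    rwa [← mul_assoc, hek', he.eq] at this
  exact ⟨k, k', greenH_of_mul_eq hkk' hk'k hek hke, greenH_of_mul_eq hk'k hkk' hek' hk'e,
    hkk', hk'k, hpk⟩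

theorem exists_greenH_mul_eq_of_greenL {q q' : S} (he : IsIdempotentElem e) (hq : GreenR q e)
    (hq' : GreenR q' e) (h : GreenL q q') :
    ∃ k k', GreenH k e ∧ GreenH k' e ∧ k * k' = e ∧ k' * k = e ∧ k * q = q' := by
  obtain ⟨⟨u, hu⟩, ⟨v, hv⟩⟩ := h
  obtain ⟨k, hek, hke, hkq⟩ := exists_mul_eq_of_mul_coe_eq he hq hq' hu
  obtain ⟨k', hek', hk'e, hk'q'⟩ := exists_mul_eq_of_mul_coe_eq he hq' hq hv
  have hkk' : k * k' = e := by
    have := hq'.mul_idem_eq_of_mul_eq (z := k * k') (z' := e)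
      (by rw [mul_assoc, hk'q', hkq, hq'.idem_mul_eq he])
    rwa [mul_assoc, hk'e, he.eq] at this
  have hk'k : k' * k = e := by
    have := hq.mul_idem_eq_of_mul_eq (z := k' * k) (z' := e)
      (by rw [mul_assoc, hkq, hk'q', hq.idem_mul_eq he])
    rwa [mul_assoc, hke, he.eq] at this
  exact ⟨k, k', greenH_of_mul_eq hkk' hk'k hek hke, greenH_of_mul_eq hk'k hkk' hek' hk'e,
    hkk', hk'k, hkq⟩

end Idempotent

section JClass

variable {J : Set S} {e : S}

theorem IsJClass.greenJ (hJ : IsJClass J) {a b : S} (ha : a ∈ J) (hb : b ∈ J) : GreenJ a b := by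
  obtain ⟨c, rfl⟩ := hJ
  exact GreenJ.trans (GreenJ.symm ha) hb

theorem IsJClass.mem_of_greenJ (hJ : IsJClass J) {a b : S} (ha : a ∈ J) (h : GreenJ a b) :
    b ∈ J := by
  obtain ⟨c, rfl⟩ := hJ
  exact GreenJ.trans ha h

theorem IsJClass.mem_of_jLe_of_jLe (hJ : IsJClass J) {b p z : S} (hb : b ∈ J) (hz : z ∈ J)
    (hbp : JLe b p) (hpz : JLe p z) : p ∈ J :=
  hJ.mem_of_greenJ hz ⟨hpz, JLe.trans (hJ.greenJ hb hz).1 hbp⟩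

theorem GreenR.mem (hJ : IsJClass J) (heJ : e ∈ J) {x : S} (h : GreenR x e) : x ∈ J :=
  hJ.mem_of_greenJ heJ h.greenJ.symm

theorem GreenL.mem (hJ : IsJClass J) (heJ : e ∈ J) {x : S} (h : GreenL x e) : x ∈ J :=
  hJ.mem_of_greenJ heJ h.greenJ.symm

theorem StableSet.greenR_mul (hJ : IsJClass J) (hJs : StableSet J) {x a : S} (hx : x ∈ J)
    (hxa : x * a ∈ J) : GreenR (x * a) x :=
  (hJs x hx a).1 (hJ.greenJ hxa hx)

theorem StableSet.greenL_mul (hJ : IsJClass J) (hJs : StableSet J) {x a : S} (hx : x ∈ J)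
    (hax : a * x ∈ J) : GreenL (a * x) x :=
  (hJs x hx a).2 (hJ.greenJ hax hx)

theorem StableSet.greenR_of_coe_eq (hJ : IsJClass J) (hJs : StableSet J) {q z : S}
    {τ : WithOne S} (hz : z ∈ J) (hq : q ∈ J) (h : (q : WithOne S) = z * τ) : GreenR q z := by
  induction τ using WithOne.recOneCoe with
  | one => rw [mul_one, WithOne.coe_inj] at h; exact h ▸ GreenR.refl z
  | coe t =>
    rw [← WithOne.coe_mul, WithOne.coe_inj] at h
    exact h ▸ hJs.greenR_mul hJ hz (h ▸ hq)

theorem StableSet.greenL_of_coe_eq (hJ : IsJClass J) (hJs : StableSet J) {p z : S}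
    {σ : WithOne S} (hz : z ∈ J) (hp : p ∈ J) (h : (p : WithOne S) = σ * z) : GreenL p z := by
  induction σ using WithOne.recOneCoe with
  | one => rw [one_mul, WithOne.coe_inj] at h; exact h ▸ GreenL.refl z
  | coe s =>
    rw [← WithOne.coe_mul, WithOne.coe_inj] at h
    exact h ▸ hJs.greenL_mul hJ hz (h ▸ hp)

theorem exists_greenL_greenR_mul_mul_eq (hJ : IsJClass J) (hJs : StableSet J)
    (he : IsIdempotentElem e) (heJ : e ∈ J) {a x : S} {σ τ : WithOne S} (hx : GreenH x e)
    (haJ : a ∈ J) (ha : (a : WithOne S) = σ * x * τ) :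
    ∃ p q : S, GreenL p e ∧ GreenR q e ∧
      ∀ z : S, GreenH z e → σ * z * τ = ((p * z * q : S) : WithOne S) := by
  obtain ⟨p, hp⟩ := exists_coe_eq_mul_coe σ e
  obtain ⟨q, hq⟩ := exists_coe_eq_coe_mul e τ
  have hpq : ∀ z : S, GreenH z e → σ * z * τ = ((p * z * q : S) : WithOne S) := by
    intro z hz
    have hez : (e : WithOne S) * z = z := by rw [← WithOne.coe_mul, hz.1.idem_mul_eq he]
    have hze : (z : WithOne S) * e = z := by rw [← WithOne.coe_mul, hz.2.mul_idem_eq he]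
    simp only [WithOne.coe_mul, hp, hq, mul_assoc]
    rw [← mul_assoc (z : WithOne S), hze, ← mul_assoc (e : WithOne S), hez]
  rw [hpq x hx, WithOne.coe_inj] at ha
  subst ha
  have hpJ : p ∈ J := hJ.mem_of_jLe_of_jLe haJ heJ (by rw [mul_assoc]; exact jLe_mul_right _ _)
    ⟨σ, 1, by rw [mul_one, hp]⟩
  have hqJ : q ∈ J := hJ.mem_of_jLe_of_jLe haJ heJ (jLe_mul_left _ _) ⟨1, τ, by rw [one_mul, hq]⟩
  exact ⟨p, q, hJs.greenL_of_coe_eq hJ heJ hpJ hp, hJs.greenR_of_coe_eq hJ heJ hqJ hq, hpq⟩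

theorem mul_mul_mem_of_greenL_of_greenR (hJ : IsJClass J) (he : IsIdempotentElem e)
    (heJ : e ∈ J) {p q y : S} (hp : GreenL p e) (hq : GreenR q e) (hy : GreenH y e) :
    p * y * q ∈ J := by
  obtain ⟨u, hu⟩ := hp.1
  obtain ⟨v, hv⟩ := hq.1
  have hyJ : y ∈ J := hy.1.mem hJ heJ
  refine hJ.mem_of_jLe_of_jLe hyJ hyJ ⟨u, v, ?_⟩ ⟨p, q, by rw [WithOne.coe_mul, WithOne.coe_mul]⟩
  rw [WithOne.coe_mul, WithOne.coe_mul, ← mul_assoc, ← mul_assoc, hu, mul_assoc, hv,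
    ← WithOne.coe_mul, ← WithOne.coe_mul, hy.1.idem_mul_eq he, hy.2.mul_idem_eq he]

theorem mem_of_coe_eq_of_mem (hJ : IsJClass J) (hJs : StableSet J) (he : IsIdempotentElem e)
    (heJ : e ∈ J) {a b x y : S} {σ τ : WithOne S} (hx : GreenH x e) (hy : GreenH y e)
    (haJ : a ∈ J) (ha : (a : WithOne S) = σ * x * τ) (hb : (b : WithOne S) = σ * y * τ) :
    b ∈ J := by
  obtain ⟨p, q, hp, hq, hpq⟩ := exists_greenL_greenR_mul_mul_eq hJ hJs he heJ hx haJ ha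
  rw [hpq y hy, WithOne.coe_inj] at hb
  exact hb ▸ mul_mul_mem_of_greenL_of_greenR hJ he heJ hp hq hy

theorem exists_greenH_of_mul_mul_eq (hJ : IsJClass J) (hJs : StableSet J)
    (he : IsIdempotentElem e) (heJ : e ∈ J) {p q p' q' y x' : S} (hp : GreenL p e)
    (hq : GreenR q e) (hp' : GreenL p' e) (hq' : GreenR q' e) (hy : GreenH y e)
    (h : p * y * q = p' * x' * q') :
    ∃ k k' l, GreenH k e ∧ GreenH k' e ∧ GreenH l e ∧ k * k' = e ∧ k' * k = e ∧
      p * k = p' ∧ l * q = q' ∧ y = k * x' * l := by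
  have hbJ := mul_mul_mem_of_greenL_of_greenR hJ he heJ hp hq hy
  have hbp : GreenR (p * y * q) p := by
    rw [mul_assoc] at hbJ ⊢; exact hJs.greenR_mul hJ (hp.mem hJ heJ) hbJ
  have hbp' : GreenR (p * y * q) p' := by
    rw [h, mul_assoc] at hbJ ⊢; exact hJs.greenR_mul hJ (hp'.mem hJ heJ) hbJ
  have hbq : GreenL (p * y * q) q := hJs.greenL_mul hJ (hq.mem hJ heJ) hbJ
  have hbq' : GreenL (p * y * q) q' := by
    rw [h] at hbJ ⊢; exact hJs.greenL_mul hJ (hq'.mem hJ heJ) hbJ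
  obtain ⟨k, k', hk, hk', hkk', hk'k, hpk⟩ :=
    exists_greenH_mul_eq_of_greenR he hp hp' (hbp.symm.trans hbp')
  obtain ⟨l, -, hl, -, -, -, hlq⟩ :=
    exists_greenH_mul_eq_of_greenL he hq hq' (hbq.symm.trans hbq')
  refine ⟨k, k', l, hk, hk', hl, hkk', hk'k, hpk, hlq, ?_⟩
  have := idem_mul_mul_idem_eq_of_mul_mul_eq hp hq (z := y) (z' := k * x' * l)
    (by rw [h, ← hpk, ← hlq]; simp only [mul_assoc])
  rwa [hy.1.idem_mul_eq he, hy.2.mul_idem_eq he, ← mul_assoc, ← mul_assoc,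
    hk.1.idem_mul_eq he, mul_assoc _ l, hl.2.mul_idem_eq he] at this

end JClass

section Nu

variable {I J N : Set S} {e : S}

theorem Nu.symm {a b : S} (h : Nu J N a b) : Nu J N b a := by
  obtain ⟨haJ, hbJ, x, hx, y, hy, s, t, ha, hb⟩ := h
  exact ⟨hbJ, haJ, y, hy, x, hx, s, t, hb, ha⟩

theorem nu_or_mem_of_coe_eq (hJ : IsJClass J) (hJs : StableSet J)
    (hmin : MinimalJClassOutside J I) (he : IsIdempotentElem e) (heJ : e ∈ J)
    (hN : N ⊆ {x | GreenH x e}) {a b x y : S} {σ τ : WithOne S} (hx : x ∈ N) (hy : y ∈ N)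
    (ha : (a : WithOne S) = σ * x * τ) (hb : (b : WithOne S) = σ * y * τ) :
    Nu J N a b ∨ (a ∈ I ∧ b ∈ I) := by
  have mem_of_not_mem : ∀ {c z : S}, (c : WithOne S) = σ * z * τ → GreenH z e → c ∉ J → c ∈ I :=
    fun hc hz hcJ => by_contra fun hcI => hcJ (hmin.2 _ hcI ⟨_, hz.1.mem hJ heJ, σ, τ, hc.symm⟩)
  by_cases haJ : a ∈ J
  · exact Or.inl ⟨haJ, mem_of_coe_eq_of_mem hJ hJs he heJ (hN hx) (hN hy) haJ ha hb,
      x, hx, y, hy, σ, τ, ha.symm, hb.symm⟩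
  · have hbJ : b ∉ J := fun hbJ =>
      haJ (mem_of_coe_eq_of_mem hJ hJs he heJ (hN hy) (hN hx) hbJ hb ha)
    exact Or.inr ⟨mem_of_not_mem ha (hN hx) haJ, mem_of_not_mem hb (hN hy) hbJ⟩

theorem Nu.mul_left (hJ : IsJClass J) (hJs : StableSet J) (hmin : MinimalJClassOutside J I)
    (he : IsIdempotentElem e) (heJ : e ∈ J) (hN : N ⊆ {x | GreenH x e}) {a b : S}
    (h : Nu J N a b) (c : S) : Nu J N (c * a) (c * b) ∨ (c * a ∈ I ∧ c * b ∈ I) := by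
  obtain ⟨-, -, x, hx, y, hy, s, t, ha, hb⟩ := h
  refine nu_or_mem_of_coe_eq hJ hJs hmin he heJ hN (σ := c * s) (τ := t) hx hy ?_ ?_
  · rw [WithOne.coe_mul, ← ha]; simp only [mul_assoc]
  · rw [WithOne.coe_mul, ← hb]; simp only [mul_assoc]

theorem Nu.mul_right (hJ : IsJClass J) (hJs : StableSet J) (hmin : MinimalJClassOutside J I)
    (he : IsIdempotentElem e) (heJ : e ∈ J) (hN : N ⊆ {x | GreenH x e}) {a b : S}
    (h : Nu J N a b) (c : S) : Nu J N (a * c) (b * c) ∨ (a * c ∈ I ∧ b * c ∈ I) := by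
  obtain ⟨-, -, x, hx, y, hy, s, t, ha, hb⟩ := h
  refine nu_or_mem_of_coe_eq hJ hJs hmin he heJ hN (σ := s) (τ := t * c) hx hy ?_ ?_
  · rw [WithOne.coe_mul, ← ha]; simp only [mul_assoc]
  · rw [WithOne.coe_mul, ← hb]; simp only [mul_assoc]

theorem Nu.trans (hJ : IsJClass J) (hJs : StableSet J) (he : IsIdempotentElem e) (heJ : e ∈ J)
    (hN : IsNormalIn N {x | GreenH x e} e) {a b c : S} (hab : Nu J N a b) (hbc : Nu J N b c) :
    Nu J N a c := by
  obtain ⟨haJ, hbJ, x, hx, y, hy, s, t, hsa, hsb⟩ := hab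
  obtain ⟨-, hcJ, x', hx', y', hy', s', t', hsb', hsc⟩ := hbc
  obtain ⟨p, q, hp, hq, hpq⟩ :=
    exists_greenL_greenR_mul_mul_eq hJ hJs he heJ (hN.1 hx) haJ hsa.symm
  obtain ⟨p', q', hp', hq', hpq'⟩ :=
    exists_greenL_greenR_mul_mul_eq hJ hJs he heJ (hN.1 hx') hbJ hsb'.symm
  have ha : a = p * x * q := WithOne.coe_injective (hsa.symm.trans (hpq x (hN.1 hx)))
  have hb : b = p * y * q := WithOne.coe_injective (hsb.symm.trans (hpq y (hN.1 hy)))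
  have hb' : b = p' * x' * q' := WithOne.coe_injective (hsb'.symm.trans (hpq' x' (hN.1 hx')))
  have hc : c = p' * y' * q' := WithOne.coe_injective (hsc.symm.trans (hpq' y' (hN.1 hy')))
  obtain ⟨k, k', l, hk, hk', hl, hkk', hk'k, hpk, hlq, hy_eq⟩ :=
    exists_greenH_of_mul_mul_eq hJ hJs he heJ hp hq hp' hq' (hN.1 hy) (hb.symm.trans hb')
  obtain ⟨xi, hxi, -, hxix'⟩ := hN.2.2.2.1 x' hx'
  have hconj : k * (y' * xi) * k' * (k * x' * l) = k * y' * l :=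
    calc k * (y' * xi) * k' * (k * x' * l) = k * y' * (xi * ((k' * k) * x')) * l := by
          simp only [mul_assoc]
      _ = k * y' * (e * l) := by
          rw [hk'k, (hN.1 hx').1.idem_mul_eq he, hxix', mul_assoc]
      _ = k * y' * l := by rw [hl.1.idem_mul_eq he]
  have hc_eq : c = p * (k * (y' * xi) * k' * y) * q := by
    rw [hc, ← hpk, ← hlq, hy_eq, hconj]; simp only [mul_assoc]
  have hn : k * (y' * xi) * k' * y ∈ N :=
    hN.2.2.1 _ (hN.2.2.2.2 k hk k' hk' hkk' hk'k _ (hN.2.2.1 _ hy' _ hxi)) _ hy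
  exact ⟨haJ, hcJ, x, hx, _, hn, p, q, by rw [ha]; simp only [WithOne.coe_mul],
    by rw [hc_eq]; simp only [WithOne.coe_mul]⟩

end Nu

end SG

theorem stmt9_general {S : Type*} [Semigroup S] (I J N : Set S) (e : S)
    (hI : SG.IsIdeal I)
    (hJ : SG.IsJClass J) (hJs : SG.StableSet J)
    (hmin : SG.MinimalJClassOutside J I)
    (he : e * e = e) (heJ : e ∈ J)
    (hN : SG.IsNormalIn N {x : S | SG.GreenH x e} e) :
    SG.IsCongruence (fun a b : S => a = b ∨ SG.Nu J N a b ∨ (a ∈ I ∧ b ∈ I)) := by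
  refine ⟨⟨fun a => Or.inl rfl, ?_, ?_⟩, fun a b c hab => ?_⟩
  · rintro a b (rfl | h | ⟨ha, hb⟩)
    exacts [Or.inl rfl, Or.inr (Or.inl h.symm), Or.inr (Or.inr ⟨hb, ha⟩)]
  · rintro a b c (rfl | hab | ⟨ha, hb⟩) (rfl | hbc | ⟨hb', hc⟩)
    · exact Or.inl rfl
    · exact Or.inr (Or.inl hbc)
    · exact Or.inr (Or.inr ⟨hb', hc⟩)
    · exact Or.inr (Or.inl hab)
    · exact Or.inr (Or.inl (hab.trans hJ hJs he heJ hN hbc))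
    · exact absurd hb' (hmin.1 b hab.2.1)
    · exact Or.inr (Or.inr ⟨ha, hb⟩)
    · exact absurd hb (hmin.1 b hbc.1)
    · exact Or.inr (Or.inr ⟨ha, hc⟩)
  · rcases hab with rfl | hab | ⟨ha, hb⟩
    · exact ⟨Or.inl rfl, Or.inl rfl⟩
    · exact ⟨Or.inr (hab.mul_left hJ hJs hmin he heJ hN.1 c),
        Or.inr (hab.mul_right hJ hJs hmin he heJ hN.1 c)⟩
    · exact ⟨Or.inr (Or.inr ⟨(hI.2 a ha c).1, (hI.2 b hb c).1⟩),
        Or.inr (Or.inr ⟨(hI.2 a ha c).2, (hI.2 b hb c).2⟩)⟩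

/-- Let `S` be a semigroup with a stable minimal ideal, and `(I, N)` an
IN-pair: `I` an ideal, `N` a normal subgroup of a maximal subgroup contained in a stable
regular J-class `J` minimal among the J-classes of `S \ I`.  Then
`R_C = Δ_S ∪ ν_N ∪ (I × I)` is a congruence on `S`. -/
theorem stmt9 {S : Type*} [Semigroup S] (M I J N : Set S) (e : S)
    (hM : SG.IsMinIdeal M) (hMs : SG.StableSet M)
    (hI : SG.IsIdeal I)
    (hJ : SG.IsJClass J) (hJs : SG.StableSet J) (hJr : SG.RegularSet J)
    (hmin : SG.MinimalJClassOutside J I)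
    (he : e * e = e) (heJ : e ∈ J)
    (hN : SG.IsNormalIn N {x : S | SG.GreenH x e} e) :
    SG.IsCongruence (fun a b : S => a = b ∨ SG.Nu J N a b ∨ (a ∈ I ∧ b ∈ I)) :=
  stmt9_general I J N e hI hJ hJs hmin he heJ hN
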